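/- Let Σ be symmetric with eigenvalues λ₁* > ⋯ > λ_d* > 0, λ₁* = 1. Define Σ_k via inexact deflation with unit vectors v_k = u_k + δ_k, where u_k is a top unit eigenvector of Σ_k, and Σ_k* via ideal deflation. If ‖δ_k‖₂ ≤ 1/6, then ‖Σ_{k+1} − Σ_{k+1}*‖_F ≤ 3‖Σ_k − Σ_k*‖_F + 5 λ_k* ‖δ_k‖₂ + 2 λ_k* ‖u_k − u_k*‖₂. -/

import Mathlib

open Matrix Finset

/-- Euclidean norm of a vector in `Fin d → ℝ`. -/
noncomputable def vnorm {d : ℕ} (x : Fin d → ℝ) : ℝ := Real.sqrt (∑ i, x i ^ 2)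

/-- Frobenius norm of a real matrix. -/
noncomputable def fnorm {d : ℕ} (A : Matrix (Fin d) (Fin d) ℝ) : ℝ :=
  Real.sqrt (∑ i, ∑ j, A i j ^ 2)

/-!
Write `A = Σ_k`, `B = Σ_k*`, `v = u + δ` and `α = vᵀ A v`. Both deflations subtract a rank-one
multiple of the deflation vector, so
`Σ_{k+1} - Σ_{k+1}* = (A - B) - (α - λ_k*) v vᵀ - λ_k* (v vᵀ - u_k* u_k*ᵀ)`,
and `‖v vᵀ - u_k* u_k*ᵀ‖_F ≤ 2 ‖v - u_k*‖ ≤ 2 (‖δ‖ + ‖u - u_k*‖)`. It remains to bound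
`|α - λ_k*| ≤ ‖A - B‖_F + λ_k* ‖δ‖²`. From above, `α ≤ λ_k ≤ λ_k* + ‖A - B‖_F` by the Rayleigh
bound and Weyl. From below, since `u` is an eigenvector and `‖u + δ‖ = 1`,
`α = λ_k (1 - ‖δ‖²) + δᵀ A δ`, and `δᵀ A δ ≥ δᵀ B δ - ‖A - B‖_F ‖δ‖² ≥ -‖A - B‖_F ‖δ‖²` because
`B = ∑_{j ≥ k} λ_j* u_j* u_j*ᵀ` is positive semidefinite with top eigenpair `(λ_k*, u_k*)`.
-/

section DeflationAlgebra

variable {n R : Type*} [Fintype n] [CommRing R]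

lemma vecMulVec_mul_mul_vecMulVec_self (a : n → R) (M : Matrix n n R) :
    vecMulVec a a * M * vecMulVec a a = (a ⬝ᵥ M *ᵥ a) • vecMulVec a a := by
  rw [mul_vecMulVec, ← mulVec_mulVec, vecMulVec_mulVec, op_smul_eq_smul,
    smul_vecMulVec]

lemma Matrix.IsSymm.sub_vecMulVec_mul_mul_vecMulVec {M : Matrix n n R} (hM : M.IsSymm)
    (a : n → R) : (M - vecMulVec a a * M * vecMulVec a a).IsSymm := by
  rw [vecMulVec_mul_mul_vecMulVec_self]
  exact hM.sub (IsSymm.smul (transpose_vecMulVec a a) _)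

lemma dotProduct_sum_smul_vecMulVec_mulVec {ι : Type*} (s : Finset ι) (c : ι → R)
    (w : ι → n → R) (x : n → R) :
    x ⬝ᵥ (∑ j ∈ s, c j • vecMulVec (w j) (w j)) *ᵥ x = ∑ j ∈ s, c j * (w j ⬝ᵥ x) ^ 2 := by
  rw [sum_mulVec, dotProduct_sum]
  refine sum_congr rfl fun j _ => ?_
  rw [smul_mulVec, vecMulVec_mulVec, op_smul_eq_smul, dotProduct_smul,
    dotProduct_smul, smul_eq_mul, smul_eq_mul, dotProduct_comm x]
  ring

lemma dotProduct_sum_smul_vecMulVec_mulVec_nonneg [LinearOrder R] [IsStrictOrderedRing R]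
    {ι : Type*} {s : Finset ι} {c : ι → R} (hc : ∀ j ∈ s, 0 ≤ c j) (w : ι → n → R) (x : n → R) :
    0 ≤ x ⬝ᵥ (∑ j ∈ s, c j • vecMulVec (w j) (w j)) *ᵥ x := by
  rw [dotProduct_sum_smul_vecMulVec_mulVec]
  exact sum_nonneg fun j hj => mul_nonneg (hc j hj) (sq_nonneg _)

end DeflationAlgebra

attribute [local instance] Matrix.frobeniusNormedAddCommGroup Matrix.frobeniusNormSMulClass

section Norms

variable {d : ℕ}

lemma vnorm_eq_norm (x : Fin d → ℝ) : vnorm x = ‖WithLp.toLp 2 x‖ := by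
  simp [vnorm, EuclideanSpace.norm_eq]

lemma fnorm_eq_norm (A : Matrix (Fin d) (Fin d) ℝ) : fnorm A = ‖A‖ := by
  simp [fnorm, frobenius_norm_def, Real.sqrt_eq_rpow]

lemma vnorm_nonneg (x : Fin d → ℝ) : 0 ≤ vnorm x := Real.sqrt_nonneg _

lemma fnorm_nonneg (A : Matrix (Fin d) (Fin d) ℝ) : 0 ≤ fnorm A := Real.sqrt_nonneg _

lemma fnorm_sub_comm (A B : Matrix (Fin d) (Fin d) ℝ) : fnorm (A - B) = fnorm (B - A) := by
  rw [fnorm_eq_norm, norm_sub_rev, fnorm_eq_norm]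

lemma dotProduct_eq_inner (x y : Fin d → ℝ) :
    x ⬝ᵥ y = inner ℝ (WithLp.toLp 2 x) (WithLp.toLp 2 y) := by
  simp [EuclideanSpace.inner_toLp_toLp, dotProduct_comm]

lemma dotProduct_self_eq_vnorm_sq (x : Fin d → ℝ) : x ⬝ᵥ x = vnorm x ^ 2 := by
  rw [dotProduct_eq_inner, real_inner_self_eq_norm_sq, vnorm_eq_norm]

lemma abs_dotProduct_le (x y : Fin d → ℝ) : |x ⬝ᵥ y| ≤ vnorm x * vnorm y := by
  rw [dotProduct_eq_inner, vnorm_eq_norm, vnorm_eq_norm]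
  exact abs_real_inner_le_norm _ _

lemma vnorm_add_le (x y : Fin d → ℝ) : vnorm (x + y) ≤ vnorm x + vnorm y := by
  simp only [vnorm_eq_norm, WithLp.toLp_add]
  exact norm_add_le _ _

lemma vnorm_mulVec_le (M : Matrix (Fin d) (Fin d) ℝ) (x : Fin d → ℝ) :
    vnorm (M *ᵥ x) ≤ fnorm M * vnorm x := by
  simp only [vnorm_eq_norm, fnorm_eq_norm, ← frobenius_norm_replicateCol (ι := Fin 1),
    replicateCol_mulVec]
  exact frobenius_norm_mul _ _

lemma abs_dotProduct_mulVec_le (M : Matrix (Fin d) (Fin d) ℝ) (x : Fin d → ℝ) :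
    |x ⬝ᵥ M *ᵥ x| ≤ fnorm M * vnorm x ^ 2 :=
  calc |x ⬝ᵥ M *ᵥ x| ≤ vnorm x * vnorm (M *ᵥ x) := abs_dotProduct_le _ _
    _ ≤ vnorm x * (fnorm M * vnorm x) := by
        gcongr
        · exact vnorm_nonneg x
        · exact vnorm_mulVec_le M x
    _ = fnorm M * vnorm x ^ 2 := by ring

lemma dotProduct_mulVec_le_add_fnorm_sub (A B : Matrix (Fin d) (Fin d) ℝ) (x : Fin d → ℝ) :
    x ⬝ᵥ A *ᵥ x ≤ x ⬝ᵥ B *ᵥ x + fnorm (A - B) * vnorm x ^ 2 := by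
  have h := abs_dotProduct_mulVec_le (A - B) x
  rw [sub_mulVec, dotProduct_sub] at h
  linarith [le_abs_self (x ⬝ᵥ A *ᵥ x - x ⬝ᵥ B *ᵥ x)]

lemma fnorm_vecMulVec_le (a b : Fin d → ℝ) : fnorm (vecMulVec a b) ≤ vnorm a * vnorm b := by
  rw [fnorm_eq_norm, vecMulVec_eq (Fin 1), vnorm_eq_norm, vnorm_eq_norm,
    ← frobenius_norm_replicateCol (ι := Fin 1), ← frobenius_norm_replicateRow (ι := Fin 1)]
  exact frobenius_norm_mul _ _

lemma fnorm_vecMulVec_self_sub_le (x y : Fin d → ℝ) :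
    fnorm (vecMulVec x x - vecMulVec y y) ≤ (vnorm x + vnorm y) * vnorm (x - y) := by
  have hsplit : vecMulVec x x - vecMulVec y y = vecMulVec x (x - y) + vecMulVec (x - y) y := by
    rw [vecMulVec_sub, sub_vecMulVec]; abel
  have h₁ := fnorm_vecMulVec_le x (x - y)
  have h₂ := fnorm_vecMulVec_le (x - y) y
  rw [fnorm_eq_norm] at h₁ h₂ ⊢
  rw [hsplit]
  linarith [norm_add_le (vecMulVec x (x - y)) (vecMulVec (x - y) y)]

lemma fnorm_smul_vecMulVec_sub_le (A B : Matrix (Fin d) (Fin d) ℝ) (α β : ℝ) {v w : Fin d → ℝ}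
    (hv : vnorm v = 1) (hw : vnorm w = 1) :
    fnorm ((A - α • vecMulVec v v) - (B - β • vecMulVec w w))
      ≤ fnorm (A - B) + |α - β| + 2 * |β| * vnorm (v - w) := by
  have hsplit : (A - α • vecMulVec v v) - (B - β • vecMulVec w w)
      = (A - B) - (α - β) • vecMulVec v v - β • (vecMulVec v v - vecMulVec w w) := by
    simp only [sub_smul, smul_sub]; abel
  have hV := fnorm_vecMulVec_le v v
  have hVW := fnorm_vecMulVec_self_sub_le v w
  rw [hv] at hV hVW
  rw [hw] at hVW
  rw [fnorm_eq_norm] at hV hVW ⊢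
  rw [hsplit, fnorm_eq_norm]
  calc ‖(A - B) - (α - β) • vecMulVec v v - β • (vecMulVec v v - vecMulVec w w)‖
      ≤ ‖A - B‖ + |α - β| * ‖vecMulVec v v‖ + |β| * ‖vecMulVec v v - vecMulVec w w‖ := by
        refine (norm_sub_le _ _).trans (add_le_add ((norm_sub_le _ _).trans ?_) ?_) <;>
          rw [norm_smul, Real.norm_eq_abs]
    _ ≤ ‖A - B‖ + |α - β| * 1 + |β| * ((1 + 1) * vnorm (v - w)) := by gcongr; linarith
    _ = ‖A - B‖ + |α - β| + 2 * |β| * vnorm (v - w) := by ring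

end Norms

structure IsTopEigenpair {d : ℕ} (A : Matrix (Fin d) (Fin d) ℝ) (μ : ℝ) (x : Fin d → ℝ) : Prop where
  mulVec_eq : A *ᵥ x = μ • x
  vnorm_eq_one : vnorm x = 1
  rayleigh_le : ∀ y, y ⬝ᵥ A *ᵥ y ≤ μ * (y ⬝ᵥ y)

namespace IsTopEigenpair

variable {d : ℕ} {A B : Matrix (Fin d) (Fin d) ℝ} {μ ν : ℝ} {x y : Fin d → ℝ}

lemma dotProduct_self (h : IsTopEigenpair A μ x) : x ⬝ᵥ x = 1 := by
  rw [dotProduct_self_eq_vnorm_sq, h.vnorm_eq_one, one_pow]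

lemma dotProduct_mulVec_self (h : IsTopEigenpair A μ x) : x ⬝ᵥ A *ᵥ x = μ := by
  rw [h.mulVec_eq, dotProduct_smul, h.dotProduct_self, smul_eq_mul, mul_one]

lemma le_add_fnorm_sub (hA : IsTopEigenpair A μ x) (hB : IsTopEigenpair B ν y) :
    μ ≤ ν + fnorm (A - B) := by
  have h := dotProduct_mulVec_le_add_fnorm_sub A B x
  rw [hA.dotProduct_mulVec_self, hA.vnorm_eq_one, one_pow, mul_one] at h
  have := hB.rayleigh_le x
  rw [hA.dotProduct_self, mul_one] at this
  linarith

lemma abs_sub_le_fnorm_sub (hA : IsTopEigenpair A μ x) (hB : IsTopEigenpair B ν y) :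
    |μ - ν| ≤ fnorm (A - B) := by
  have h₁ := hA.le_add_fnorm_sub hB
  have h₂ := hB.le_add_fnorm_sub hA
  rw [fnorm_sub_comm] at h₂
  exact abs_sub_le_iff.mpr ⟨by linarith, by linarith⟩

lemma dotProduct_mulVec_add (hA : IsTopEigenpair A μ x) (hsymm : A.IsSymm) {δ : Fin d → ℝ}
    (hv : vnorm (x + δ) = 1) :
    (x + δ) ⬝ᵥ A *ᵥ (x + δ) = μ * (1 - vnorm δ ^ 2) + δ ⬝ᵥ A *ᵥ δ := by
  have hcross : 2 * (x ⬝ᵥ δ) = -vnorm δ ^ 2 := by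
    have h := dotProduct_self_eq_vnorm_sq (x + δ)
    rw [hv, add_dotProduct, dotProduct_add, dotProduct_add, hA.dotProduct_self,
      dotProduct_comm δ x, dotProduct_self_eq_vnorm_sq δ] at h
    linarith
  have hswap : x ⬝ᵥ A *ᵥ δ = μ * (x ⬝ᵥ δ) := by
    rw [dotProduct_mulVec, ← mulVec_transpose, hsymm.eq, hA.mulVec_eq, smul_dotProduct,
      smul_eq_mul]
  rw [mulVec_add, dotProduct_add, add_dotProduct, add_dotProduct, hA.dotProduct_mulVec_self,
    hswap, hA.mulVec_eq, dotProduct_smul, smul_eq_mul, dotProduct_comm δ x]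
  linear_combination μ * hcross

lemma abs_dotProduct_mulVec_add_sub_le (hA : IsTopEigenpair A μ x) (hsymm : A.IsSymm)
    (hB : IsTopEigenpair B ν y) (hBpsd : ∀ z, 0 ≤ z ⬝ᵥ B *ᵥ z) {δ : Fin d → ℝ}
    (hv : vnorm (x + δ) = 1) (hδ : vnorm δ ≤ 1) :
    |(x + δ) ⬝ᵥ A *ᵥ (x + δ) - ν| ≤ fnorm (A - B) + ν * vnorm δ ^ 2 := by
  have hμν := abs_le.mp (hA.abs_sub_le_fnorm_sub hB)
  have hupper : (x + δ) ⬝ᵥ A *ᵥ (x + δ) ≤ μ := by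
    simpa [dotProduct_self_eq_vnorm_sq (x + δ), hv] using hA.rayleigh_le (x + δ)
  have hδA : -(fnorm (A - B) * vnorm δ ^ 2) ≤ δ ⬝ᵥ A *ᵥ δ := by
    have := dotProduct_mulVec_le_add_fnorm_sub B A δ
    rw [← fnorm_sub_comm] at this
    linarith [hBpsd δ]
  have hε : vnorm δ ^ 2 ≤ 1 := pow_le_one₀ (vnorm_nonneg δ) hδ
  have hν := mul_le_mul_of_nonneg_right hμν.1 (sub_nonneg.mpr hε)
  have hν₀ : 0 ≤ ν := hB.dotProduct_mulVec_self ▸ hBpsd y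
  rw [hA.dotProduct_mulVec_add hsymm hv] at hupper ⊢
  rw [abs_le]
  constructor <;> nlinarith [sq_nonneg (vnorm δ)]

end IsTopEigenpair

section Orthonormal

variable {d : ℕ} {w : ℕ → Fin d → ℝ}

lemma sum_vecMulVec_self_eq_one_of_orthonormal
    (hw : ∀ i j, i < d → j < d → w i ⬝ᵥ w j = if i = j then 1 else 0) :
    ∑ j ∈ range d, vecMulVec (w j) (w j) = 1 := by
  let U : Matrix (Fin d) (Fin d) ℝ := of fun j => w j
  have hU : U * Uᵀ = 1 := by
    ext i j
    simpa [U, mul_apply, one_apply, Fin.val_inj, dotProduct] using hw i j i.isLt j.isLt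
  ext a b
  have := congr_fun₂ (show Uᵀ * U = 1 from mul_eq_one_comm.mp hU) a b
  simpa [U, mul_apply, Matrix.sum_apply, vecMulVec_apply, Fin.sum_univ_eq_sum_range
    (fun j => w j a * w j b)] using this

lemma sum_sq_dotProduct_of_orthonormal
    (hw : ∀ i j, i < d → j < d → w i ⬝ᵥ w j = if i = j then 1 else 0) (x : Fin d → ℝ) :
    ∑ j ∈ range d, (w j ⬝ᵥ x) ^ 2 = x ⬝ᵥ x := by
  simpa [sum_vecMulVec_self_eq_one_of_orthonormal hw] using
    (dotProduct_sum_smul_vecMulVec_mulVec (range d) 1 w x).symm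

lemma sum_smul_vecMulVec_mulVec_of_orthonormal
    (hw : ∀ i j, i < d → j < d → w i ⬝ᵥ w j = if i = j then 1 else 0) {s : Finset ℕ}
    (hs : s ⊆ range d) (c : ℕ → ℝ) {i : ℕ} (hi : i ∈ s) :
    (∑ j ∈ s, c j • vecMulVec (w j) (w j)) *ᵥ w i = c i • w i := by
  have hid : i < d := mem_range.mp (hs hi)
  rw [sum_mulVec, sum_eq_single_of_mem i hi]
  · rw [smul_mulVec, vecMulVec_mulVec, op_smul_eq_smul, hw i i hid hid, if_pos rfl, one_smul]
  · intro j hj hji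
    rw [smul_mulVec, vecMulVec_mulVec, op_smul_eq_smul, hw j i (mem_range.mp (hs hj)) hid,
      if_neg hji, zero_smul, smul_zero]

lemma eq_sum_smul_vecMulVec_of_orthonormal
    (hw : ∀ i j, i < d → j < d → w i ⬝ᵥ w j = if i = j then 1 else 0)
    {M : Matrix (Fin d) (Fin d) ℝ} {c : ℕ → ℝ} (heig : ∀ j, j < d → M *ᵥ w j = c j • w j) :
    M = ∑ j ∈ range d, c j • vecMulVec (w j) (w j) := by
  calc M = M * ∑ j ∈ range d, vecMulVec (w j) (w j) := by
        rw [sum_vecMulVec_self_eq_one_of_orthonormal hw, mul_one]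
    _ = ∑ j ∈ range d, c j • vecMulVec (w j) (w j) := by
        rw [mul_sum]
        refine sum_congr rfl fun j hj => ?_
        rw [mul_vecMulVec, heig j (mem_range.mp hj), smul_vecMulVec]

lemma eq_sum_Ico_of_deflation
    (hw : ∀ i j, i < d → j < d → w i ⬝ᵥ w j = if i = j then 1 else 0)
    {c : ℕ → ℝ} {T : ℕ → Matrix (Fin d) (Fin d) ℝ}
    (h₀ : T 0 = ∑ j ∈ range d, c j • vecMulVec (w j) (w j))
    (hrec : ∀ m, m < d → T (m + 1) = T m - vecMulVec (w m) (w m) * T m * vecMulVec (w m) (w m)) :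
    ∀ m, m ≤ d → T m = ∑ j ∈ Ico m d, c j • vecMulVec (w j) (w j)
  | 0, _ => by rw [h₀, range_eq_Ico]
  | m + 1, hm => by
    have ih := eq_sum_Ico_of_deflation hw h₀ hrec m (Nat.le_of_succ_le hm)
    have hmem : m ∈ Ico m d := left_mem_Ico.mpr hm
    have hsub : Ico m d ⊆ range d := fun j hj => mem_range.mpr (mem_Ico.mp hj).2
    have hcoef : w m ⬝ᵥ T m *ᵥ w m = c m := by
      rw [ih, sum_smul_vecMulVec_mulVec_of_orthonormal hw hsub c hmem, dotProduct_smul,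
        hw m m hm hm, if_pos rfl, smul_eq_mul, mul_one]
    rw [hrec m hm, vecMulVec_mul_mul_vecMulVec_self, hcoef, ih, sum_eq_sum_Ico_succ_bot hm]
    abel

lemma isTopEigenpair_sum_Ico_of_orthonormal
    (hw : ∀ i j, i < d → j < d → w i ⬝ᵥ w j = if i = j then 1 else 0) {c : ℕ → ℝ} {k : ℕ}
    (hk : k < d) (hmax : ∀ j, k ≤ j → j < d → c j ≤ c k) (hck : 0 ≤ c k) :
    IsTopEigenpair (∑ j ∈ Ico k d, c j • vecMulVec (w j) (w j)) (c k) (w k) where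
  mulVec_eq := sum_smul_vecMulVec_mulVec_of_orthonormal hw
    (fun j hj => mem_range.mpr (mem_Ico.mp hj).2) c (left_mem_Ico.mpr hk)
  vnorm_eq_one := by
    have h := dotProduct_self_eq_vnorm_sq (w k)
    rw [hw k k hk hk, if_pos rfl, eq_comm] at h
    exact (pow_eq_one_iff_of_nonneg (vnorm_nonneg _) two_ne_zero).mp h
  rayleigh_le y := by
    calc y ⬝ᵥ (∑ j ∈ Ico k d, c j • vecMulVec (w j) (w j)) *ᵥ y
        = ∑ j ∈ Ico k d, c j * (w j ⬝ᵥ y) ^ 2 := dotProduct_sum_smul_vecMulVec_mulVec _ _ _ _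
      _ ≤ ∑ j ∈ Ico k d, c k * (w j ⬝ᵥ y) ^ 2 := by
        gcongr with j hj
        exact hmax j (mem_Ico.mp hj).1 (mem_Ico.mp hj).2
      _ ≤ ∑ j ∈ range d, c k * (w j ⬝ᵥ y) ^ 2 := by
        refine sum_le_sum_of_subset_of_nonneg (fun j hj => mem_range.mpr (mem_Ico.mp hj).2) ?_
        exact fun j _ _ => mul_nonneg hck (sq_nonneg _)
      _ = c k * (y ⬝ᵥ y) := by rw [← mul_sum, sum_sq_dotProduct_of_orthonormal hw]

end Orthonormal

/-- Indices are shifted by one from the paper: `Σ_k` is `S (k - 1)`. -/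
theorem matrix_diff_propagate_general {d : ℕ}
    (Sig : Matrix (Fin d) (Fin d) ℝ) (hsym : Sig.IsSymm)
    (lamstar : ℕ → ℝ) (ustar : ℕ → Fin d → ℝ)
    (hdec : ∀ i j, i < j → j < d → lamstar j < lamstar i)
    (hpos : ∀ j, j < d → 0 < lamstar j)
    (hortho : ∀ i j, i < d → j < d → ustar i ⬝ᵥ ustar j = if i = j then 1 else 0)
    (heig : ∀ j, j < d → Sig.mulVec (ustar j) = lamstar j • ustar j)
    (S Sstar : ℕ → Matrix (Fin d) (Fin d) ℝ)
    (v u δ : ℕ → Fin d → ℝ)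
    (hS0 : S 0 = Sig) (hSstar0 : Sstar 0 = Sig)
    (hSrec : ∀ k', S (k' + 1) =
      S k' - vecMulVec (v k') (v k') * S k' * vecMulVec (v k') (v k'))
    (hSstarrec : ∀ k', k' < d →
      Sstar (k' + 1) = Sstar k' -
        vecMulVec (ustar k') (ustar k') * Sstar k' * vecMulVec (ustar k') (ustar k'))
    (hvdef : ∀ k', v k' = u k' + δ k')
    (hvunit : ∀ k', vnorm (v k') = 1)
    (lam : ℕ → ℝ)
    (hueig : ∀ k', (S k').mulVec (u k') = lam k' • u k')
    (huunit : ∀ k', vnorm (u k') = 1)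
    (hutop : ∀ k', ∀ x : Fin d → ℝ, x ⬝ᵥ (S k').mulVec x ≤ lam k' * (x ⬝ᵥ x))
    (k : ℕ) (hk : k < d)
    (hδ : vnorm (δ k) ≤ 1 / 6) :
    fnorm (S (k + 1) - Sstar (k + 1))
      ≤ 3 * fnorm (S k - Sstar k) + 5 * lamstar k * vnorm (δ k)
        + 2 * lamstar k * vnorm (u k - ustar k) := by
  have hS_symm : ∀ m, (S m).IsSymm := by
    intro m
    induction m with
    | zero => exact hS0 ▸ hsym
    | succ m ih => exact hSrec m ▸ ih.sub_vecMulVec_mul_mul_vecMulVec (v m)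
  have hSstar : Sstar k = ∑ j ∈ Ico k d, lamstar j • vecMulVec (ustar j) (ustar j) :=
    eq_sum_Ico_of_deflation hortho
      (hSstar0.trans (eq_sum_smul_vecMulVec_of_orthonormal hortho heig)) hSstarrec k hk.le
  have hls : 0 ≤ lamstar k := (hpos k hk).le
  have hB : IsTopEigenpair (Sstar k) (lamstar k) (ustar k) := hSstar ▸
    isTopEigenpair_sum_Ico_of_orthonormal hortho hk
      (fun j hkj hj => hkj.eq_or_lt.elim (fun h => h ▸ le_rfl) fun h => (hdec k j h hj).le) hls
  have hB_nonneg : ∀ x, 0 ≤ x ⬝ᵥ Sstar k *ᵥ x := fun x => hSstar ▸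
    dotProduct_sum_smul_vecMulVec_mulVec_nonneg (fun j hj => (hpos j (mem_Ico.mp hj).2).le) _ x
  have hA : IsTopEigenpair (S k) (lam k) (u k) := ⟨hueig k, huunit k, hutop k⟩
  have hα := hA.abs_dotProduct_mulVec_add_sub_le (hS_symm k) hB hB_nonneg
    (hvdef k ▸ hvunit k) (hδ.trans (by norm_num))
  rw [← hvdef k] at hα
  have hvw : vnorm (v k - ustar k) ≤ vnorm (δ k) + vnorm (u k - ustar k) := by
    rw [hvdef k, add_sub_right_comm, add_comm]
    exact vnorm_add_le _ _
  rw [hSrec k, hSstarrec k hk, vecMulVec_mul_mul_vecMulVec_self,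
    vecMulVec_mul_mul_vecMulVec_self, hB.dotProduct_mulVec_self]
  have hstep := fnorm_smul_vecMulVec_sub_le (S k) (Sstar k) (v k ⬝ᵥ S k *ᵥ v k) (lamstar k)
    (hvunit k) hB.vnorm_eq_one
  rw [abs_of_nonneg hls] at hstep
  have hε := vnorm_nonneg (δ k)
  have hε_sq : lamstar k * vnorm (δ k) ^ 2 ≤ lamstar k * vnorm (δ k) :=
    mul_le_mul_of_nonneg_left (by nlinarith) hls
  linarith [fnorm_nonneg (S k - Sstar k), mul_le_mul_of_nonneg_left hvw hls, mul_nonneg hls hε]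

/-- One-step propagation of the deflation error
(`Σ_k` is `S (k-1)` here, so the index is shifted by one). -/
theorem matrix_diff_propagate {d : ℕ}
    (Sig : Matrix (Fin d) (Fin d) ℝ) (hsym : Sig.IsSymm)
    (lamstar : ℕ → ℝ) (ustar : ℕ → Fin d → ℝ)
    (hlam1 : lamstar 0 = 1)
    (hdec : ∀ i j, i < j → j < d → lamstar j < lamstar i)
    (hpos : ∀ j, j < d → 0 < lamstar j)
    (hunit : ∀ j, j < d → vnorm (ustar j) = 1)
    (hortho : ∀ i j, i < d → j < d → ustar i ⬝ᵥ ustar j = if i = j then 1 else 0)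
    (heig : ∀ j, j < d → Sig.mulVec (ustar j) = lamstar j • ustar j)
    (S Sstar : ℕ → Matrix (Fin d) (Fin d) ℝ)
    (v u δ : ℕ → Fin d → ℝ)
    (hS0 : S 0 = Sig) (hSstar0 : Sstar 0 = Sig)
    (hSrec : ∀ k', S (k' + 1) =
      S k' - vecMulVec (v k') (v k') * S k' * vecMulVec (v k') (v k'))
    (hSstarrec : ∀ k', k' < d →
      Sstar (k' + 1) = Sstar k' -
        vecMulVec (ustar k') (ustar k') * Sstar k' * vecMulVec (ustar k') (ustar k'))
    (hvdef : ∀ k', v k' = u k' + δ k')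
    (hvunit : ∀ k', vnorm (v k') = 1)
    (lam : ℕ → ℝ)
    (hueig : ∀ k', (S k').mulVec (u k') = lam k' • u k')
    (huunit : ∀ k', vnorm (u k') = 1)
    (hutop : ∀ k', ∀ x : Fin d → ℝ, x ⬝ᵥ (S k').mulVec x ≤ lam k' * (x ⬝ᵥ x))
    (k : ℕ) (hk : k < d)
    (hδ : vnorm (δ k) ≤ 1 / 6) :
    fnorm (S (k + 1) - Sstar (k + 1))
      ≤ 3 * fnorm (S k - Sstar k) + 5 * lamstar k * vnorm (δ k)
        + 2 * lamstar k * vnorm (u k - ustar k) :=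
  matrix_diff_propagate_general Sig hsym lamstar ustar hdec hpos hortho heig S Sstar v u δ hS0
    hSstar0 hSrec hSstarrec hvdef hvunit lam hueig huunit hutop k hk hδ
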